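/- arXiv:2003.03882 — 2 statements merged into one kernel-verified Lean document; each statement's English description precedes it below -/
import Mathlib

section
/- If R : H → ℝ is η-strongly convex on a real inner product space H, meaning R(t·f + (1−t)·f') ≤ t·R(f) + (1−t)·R(f') − (η·t·(1−t)/2)·‖f − f'‖² for all f, f' ∈ H and t ∈ [0,1], then for any functions f₁,…,f_m ∈ H, R((1/m)·∑ᵢ fᵢ) ≤ (1/m)·∑ᵢ R(fᵢ) − (η/(4m²))·∑_{i≠j} ‖fᵢ − fⱼ‖². -/
/-!
Subtracting `η/2 ‖·‖²` makes `R` convex, so Jensen's inequality at uniform weights bounds `R` at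
the mean by the mean of `R` minus `η/2` times the variance `(1/m) ∑ ‖fᵢ‖² - ‖(1/m) ∑ fᵢ‖²`.
The variance is `(1/(2m²)) ∑_{i,j} ‖fᵢ - fⱼ‖²`, and the diagonal terms of that sum vanish.
-/

open Finset RealInnerProductSpace

section

variable {E : Type*} [NormedAddCommGroup E] [InnerProductSpace ℝ E]

theorem sum_sum_norm_sub_sq {ι : Type*} (s : Finset ι) (p : ι → E) :
    ∑ i ∈ s, ∑ j ∈ s, ‖p i - p j‖ ^ 2 =
      2 * (#s * ∑ i ∈ s, ‖p i‖ ^ 2 - ‖∑ i ∈ s, p i‖ ^ 2) := by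
  have hS : ‖∑ i ∈ s, p i‖ ^ 2 = ∑ i ∈ s, ∑ j ∈ s, ⟪p i, p j⟫ := by
    rw [← real_inner_self_eq_norm_sq, sum_inner]
    simp_rw [inner_sum]
  simp only [hS, norm_sub_sq_real, sum_add_distrib, sum_sub_distrib, sum_const, ← mul_sum,
    nsmul_eq_mul]
  ring

theorem StrongConvexOn.map_sum_le {s : Set E} {m : ℝ} {f : E → ℝ} (hf : StrongConvexOn s m f)
    {ι : Type*} {t : Finset ι} {w : ι → ℝ} {p : ι → E} (hw₀ : ∀ i ∈ t, 0 ≤ w i)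
    (hw₁ : ∑ i ∈ t, w i = 1) (hp : ∀ i ∈ t, p i ∈ s) :
    f (∑ i ∈ t, w i • p i) ≤
      ∑ i ∈ t, w i * f (p i) -
        m / 2 * (∑ i ∈ t, w i * ‖p i‖ ^ 2 - ‖∑ i ∈ t, w i • p i‖ ^ 2) := by
  have := (strongConvexOn_iff_convex.1 hf).map_sum_le hw₀ hw₁ hp
  simp only [smul_eq_mul, mul_sub, sum_sub_distrib, mul_left_comm _ (m / 2), ← mul_sum] at this
  linarith

theorem StrongConvexOn.map_average_le {s : Set E} {m : ℝ} {f : E → ℝ} (hf : StrongConvexOn s m f)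
    {ι : Type*} {t : Finset ι} (ht : t.Nonempty) {p : ι → E} (hp : ∀ i ∈ t, p i ∈ s) :
    f ((1 / (#t : ℝ)) • ∑ i ∈ t, p i) ≤
      1 / (#t : ℝ) * ∑ i ∈ t, f (p i) -
        m / (4 * (#t : ℝ) ^ 2) * ∑ i ∈ t, ∑ j ∈ t, ‖p i - p j‖ ^ 2 := by
  have hcard : (0 : ℝ) < #t := by exact_mod_cast ht.card_pos
  have := hf.map_sum_le (w := fun _ ↦ 1 / (#t : ℝ)) (fun _ _ ↦ by positivity)
    (by simp [hcard.ne']) hp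
  rw [← smul_sum, ← mul_sum, ← mul_sum, norm_smul, Real.norm_of_nonneg (by positivity)] at this
  convert this using 2
  rw [sum_sum_norm_sub_sq]
  field_simp
  ring

end

open Finset in
theorem stmt_1 {H : Type*} [NormedAddCommGroup H] [InnerProductSpace ℝ H]
    (η : ℝ) (R : H → ℝ)
    (hsc : ∀ f f' : H, ∀ t : ℝ, t ∈ Set.Icc (0 : ℝ) 1 →
      R (t • f + (1 - t) • f') ≤ t * R f + (1 - t) * R f' - η * t * (1 - t) / 2 * ‖f - f'‖ ^ 2)
    (m : ℕ) (hm : 1 ≤ m) (f : Fin m → H) :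
    R ((1 / (m : ℝ)) • ∑ i, f i) ≤
      (1 / (m : ℝ)) * ∑ i, R (f i) -
        η / (4 * (m : ℝ) ^ 2) *
          ∑ p ∈ (Finset.univ : Finset (Fin m × Fin m)).filter (fun p => p.1 ≠ p.2),
            ‖f p.1 - f p.2‖ ^ 2 := by
  have hR : StrongConvexOn Set.univ η R := by
    refine ⟨convex_univ, fun x _ y _ a b ha _ hab ↦ ?_⟩
    obtain rfl := eq_sub_of_add_eq' hab
    have h := hsc x y a ⟨ha, by linarith⟩
    change _ ≤ a * R x + (1 - a) * R y - a * (1 - a) * (η / 2 * ‖x - y‖ ^ 2)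
    linarith
  have hdiag : ∑ p ∈ (univ : Finset (Fin m × Fin m)).filter (fun p => p.1 ≠ p.2),
      ‖f p.1 - f p.2‖ ^ 2 = ∑ i, ∑ j, ‖f i - f j‖ ^ 2 := by
    rw [sum_filter_of_ne fun p _ h ↦ by rintro hp; simp [hp] at h, Fintype.sum_prod_type]
  have huniv : (univ : Finset (Fin m)).Nonempty := univ_nonempty_iff.2 ⟨⟨0, hm⟩⟩
  simpa [hdiag] using hR.map_average_le huniv fun i _ ↦ Set.mem_univ (f i)
end

section
/- Let R : H → ℝ be differentiable with f_* a minimizer of R over the real Hilbert space H, and suppose the first-order strong convexity inequality R(f) − R(f_*) + (η/2)‖f − f_*‖² ≤ ⟨∇R(f), f − f_*⟩ holds for a given f̂ ∈ H. Let R̂ : H → ℝ be convex and differentiable with f̂ a minimizer of R̂. Then R(f̂) − R(f_*) + (η/2)‖f̂ − f_*‖² ≤ ‖∇R(f̂) − ∇R(f_*) − (∇R̂(f̂) − ∇R̂(f_*))‖·‖f̂ − f_*‖ + ‖∇R(f_*) − ∇R̂(f_*)‖·‖f̂ − f_*‖. -/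
/-!
Split `∇R(f̂)` as `(∇R(f̂) - ∇R(f_*) - (∇R̂(f̂) - ∇R̂(f_*))) + (∇R(f_*) - ∇R̂(f_*)) + ∇R̂(f̂)`.
Since `f̂` minimizes `R̂`, the last summand vanishes; pairing with `f̂ - f_*` and applying
Cauchy–Schwarz to the other two bounds the right-hand side of the first-order inequality.
-/

theorem IsLocalMin.hasGradientAt_eq_zero {H : Type*} [NormedAddCommGroup H]
    [InnerProductSpace ℝ H] [CompleteSpace H] {f : H → ℝ} {g a : H}
    (hmin : IsLocalMin f a) (hg : HasGradientAt f g a) : g = 0 :=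
  (InnerProductSpace.toDual ℝ H).map_eq_zero_iff.mp (hmin.hasFDerivAt_eq_zero hg.hasFDerivAt)

theorem real_inner_le_norm_gradient_gap {H : Type*} [NormedAddCommGroup H]
    [InnerProductSpace ℝ H] {g₁ g₀ ĝ₁ ĝ₀ d : H} (hĝ₁ : inner ℝ ĝ₁ d ≤ 0) :
    inner ℝ g₁ d ≤ ‖g₁ - g₀ - (ĝ₁ - ĝ₀)‖ * ‖d‖ + ‖g₀ - ĝ₀‖ * ‖d‖ := by
  have hsplit : g₁ = (g₁ - g₀ - (ĝ₁ - ĝ₀)) + (g₀ - ĝ₀) + ĝ₁ := by abel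
  calc inner ℝ g₁ d
      = inner ℝ (g₁ - g₀ - (ĝ₁ - ĝ₀)) d + inner ℝ (g₀ - ĝ₀) d + inner ℝ ĝ₁ d := by
        conv_lhs => rw [hsplit]
        rw [inner_add_left, inner_add_left]
    _ ≤ ‖g₁ - g₀ - (ĝ₁ - ĝ₀)‖ * ‖d‖ + ‖g₀ - ĝ₀‖ * ‖d‖ + 0 := by
        gcongr
        · exact real_inner_le_norm _ _
        · exact real_inner_le_norm _ _
    _ = ‖g₁ - g₀ - (ĝ₁ - ĝ₀)‖ * ‖d‖ + ‖g₀ - ĝ₀‖ * ‖d‖ := add_zero _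

theorem stmt_11_general {H : Type*} [NormedAddCommGroup H] [InnerProductSpace ℝ H]
    [CompleteSpace H]
    (η : ℝ)
    (R Rhat : H → ℝ) (gradR gradRhat : H → H)
    (fhat fstar : H)
    (hfo : R fhat - R fstar + η / 2 * ‖fhat - fstar‖ ^ 2 ≤
      inner ℝ (gradR fhat) (fhat - fstar))
    (hRhatdiff : ∀ x : H, HasGradientAt Rhat (gradRhat x) x)
    (hRhatmin : ∀ f : H, Rhat fhat ≤ Rhat f) :
    R fhat - R fstar + η / 2 * ‖fhat - fstar‖ ^ 2 ≤
      ‖gradR fhat - gradR fstar - (gradRhat fhat - gradRhat fstar)‖ * ‖fhat - fstar‖ +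
        ‖gradR fstar - gradRhat fstar‖ * ‖fhat - fstar‖ := by
  have hmin : IsLocalMin Rhat fhat :=
    (isMinOn_univ_iff.mpr hRhatmin).isLocalMin Filter.univ_mem
  have hcrit : gradRhat fhat = 0 := hmin.hasGradientAt_eq_zero (hRhatdiff fhat)
  refine hfo.trans (real_inner_le_norm_gradient_gap ?_)
  rw [hcrit, inner_zero_left]

theorem stmt_11 {H : Type*} [NormedAddCommGroup H] [InnerProductSpace ℝ H]
    [CompleteSpace H]
    (η : ℝ) (hη : 0 ≤ η)
    (R Rhat : H → ℝ) (gradR gradRhat : H → H)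
    (fhat fstar : H)
    (hfo : R fhat - R fstar + η / 2 * ‖fhat - fstar‖ ^ 2 ≤
      inner ℝ (gradR fhat) (fhat - fstar))
    (hRhatconv : ConvexOn ℝ Set.univ Rhat)
    (hRhatdiff : ∀ x : H, HasGradientAt Rhat (gradRhat x) x)
    (hRhatmin : ∀ f : H, Rhat fhat ≤ Rhat f)
    (hRmin : ∀ f : H, R fstar ≤ R f) :
    R fhat - R fstar + η / 2 * ‖fhat - fstar‖ ^ 2 ≤
      ‖gradR fhat - gradR fstar - (gradRhat fhat - gradRhat fstar)‖ * ‖fhat - fstar‖ +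
        ‖gradR fstar - gradRhat fstar‖ * ‖fhat - fstar‖ :=
  stmt_11_general η R Rhat gradR gradRhat fhat fstar hfo hRhatdiff hRhatmin
end
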